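/- Conductance bounds mixing time from below: for a reversible, irreducible Markov chain Q on a finite state space Ω with stationary distribution π, the total variation mixing time (to threshold 1/4) satisfies t_mix ≥ 1/(4Φ*), where Φ* = min over nonempty proper subsets S of Φ(S) = Q(S, Sᶜ)/min(π(S), π(Sᶜ)) and Q(S,Sᶜ) = ∑_{x∈S, y∈Sᶜ} π(x)Q(y|x). -/
import Mathlib

open Finset

private lemma pow_entries_nonneg {Ω : Type*} [Fintype Ω] [DecidableEq Ω]
    (Q : Matrix Ω Ω ℝ) (hQ0 : ∀ x y, 0 ≤ Q x y) :
    ∀ k x y, 0 ≤ (Q ^ k) x y := by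
  intro k
  induction k with
  | zero =>
    intro x y
    simp only [pow_zero, Matrix.one_apply]
    split <;> norm_num
  | succ n ih =>
    intro x y
    rw [pow_succ, Matrix.mul_apply]
    exact Finset.sum_nonneg fun z _ => mul_nonneg (ih x z) (hQ0 z y)

private lemma pow_row_sum {Ω : Type*} [Fintype Ω] [DecidableEq Ω]
    (Q : Matrix Ω Ω ℝ) (hQ1 : ∀ x, ∑ y, Q x y = 1) :
    ∀ k x, ∑ y, (Q ^ k) x y = 1 := by
  intro k
  induction k with
  | zero => intro x; simp [Matrix.one_apply]
  | succ n ih =>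
    intro x
    simp only [pow_succ, Matrix.mul_apply]
    rw [Finset.sum_comm]
    calc ∑ z, ∑ y, (Q ^ n) x z * Q z y
        = ∑ z, (Q ^ n) x z * ∑ y, Q z y := by simp [Finset.mul_sum]
      _ = 1 := by simp [hQ1, ih x]

private lemma pow_stationary {Ω : Type*} [Fintype Ω] [DecidableEq Ω]
    (Q : Matrix Ω Ω ℝ) (π : Ω → ℝ)
    (hstat : ∀ y, ∑ x, π x * Q x y = π y) :
    ∀ k y, ∑ x, π x * (Q ^ k) x y = π y := by
  intro k
  induction k with
  | zero =>
    intro y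
    simp [Matrix.one_apply]
  | succ n ih =>
    intro y
    simp only [pow_succ, Matrix.mul_apply, Finset.mul_sum]
    rw [Finset.sum_comm]
    calc ∑ z, ∑ x, π x * ((Q ^ n) x z * Q z y)
        = ∑ z, (∑ x, π x * (Q ^ n) x z) * Q z y := by
          congr 1; ext z; rw [Finset.sum_mul]; congr 1; ext x; ring
      _ = ∑ z, π z * Q z y := by simp only [ih]
      _ = π y := hstat y

/-- Core argument, assuming `π(S) ≤ 1/2`. -/
private lemma aux_bound {Ω : Type*} [Fintype Ω] [DecidableEq Ω]
    (Q : Matrix Ω Ω ℝ) (π : Ω → ℝ)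
    (hQ0 : ∀ x y, 0 ≤ Q x y) (hQ1 : ∀ x, ∑ y, Q x y = 1)
    (hπ0 : ∀ x, 0 < π x) (hπ1 : ∑ x, π x = 1)
    (hrev : ∀ x y, π x * Q x y = π y * Q y x)
    (t : ℕ)
    (hmix : ∀ x : Ω, (1 / 2) * ∑ y, |(Q ^ t) x y - π y| ≤ 1 / 4)
    (S : Finset Ω) (hS1 : S.Nonempty)
    (hhalf : ∑ x ∈ S, π x ≤ 1 / 2) :
    1 / 4 ≤ (t : ℝ) * ((∑ x ∈ S, ∑ y ∈ Sᶜ, π x * Q x y) / (∑ x ∈ S, π x)) := by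
  set pS : ℝ := ∑ x ∈ S, π x with hpSdef
  have hpS : 0 < pS := Finset.sum_pos (fun x _ => hπ0 x) hS1
  set a : ℝ := ∑ x ∈ S, ∑ y ∈ Sᶜ, π x * Q x y with hadef
  have ha0 : 0 ≤ a :=
    Finset.sum_nonneg fun x _ => Finset.sum_nonneg fun y _ =>
      mul_nonneg (hπ0 x).le (hQ0 x y)
  have hstat : ∀ y, ∑ x, π x * Q x y = π y := by
    intro y
    calc ∑ x, π x * Q x y = ∑ x, π y * Q y x := by
          apply Finset.sum_congr rfl; intro x _; exact hrev x y
      _ = π y * ∑ x, Q y x := by rw [Finset.mul_sum]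
      _ = π y := by rw [hQ1]; ring
  have hstatk := pow_stationary Q π hstat
  have hpow0 := pow_entries_nonneg Q hQ0
  have hrowk := pow_row_sum Q hQ1
  -- the distribution at time k starting from π restricted to S
  set μ : ℕ → Ω → ℝ := fun k y => (∑ x ∈ S, π x * (Q ^ k) x y) / pS with hμdef
  have hμ0 : ∀ k y, 0 ≤ μ k y := fun k y =>
    div_nonneg (Finset.sum_nonneg fun x _ => mul_nonneg (hπ0 x).le (hpow0 k x y)) hpS.le
  have hμle : ∀ k y, μ k y ≤ π y / pS := by
    intro k y
    have h : ∑ x ∈ S, π x * (Q ^ k) x y ≤ π y := by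
      rw [← hstatk k y]
      exact Finset.sum_le_sum_of_subset_of_nonneg (Finset.subset_univ S)
        (fun x _ _ => mul_nonneg (hπ0 x).le (hpow0 k x y))
    simp only [hμdef]
    gcongr
  -- one-step evolution
  have hμsucc : ∀ k y, μ (k + 1) y = ∑ z, μ k z * Q z y := by
    intro k y
    simp only [hμdef, pow_succ, Matrix.mul_apply]
    trans ∑ x ∈ S, ∑ z, π x * (Q ^ k) x z * Q z y / pS
    · rw [Finset.sum_div]
      apply Finset.sum_congr rfl
      intro x _
      rw [Finset.mul_sum, Finset.sum_div]
      apply Finset.sum_congr rfl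
      intro z _
      ring
    · rw [Finset.sum_comm]
      apply Finset.sum_congr rfl
      intro z _
      rw [div_mul_eq_mul_div, Finset.sum_mul, Finset.sum_div]
  -- mass leakage bound per step
  have hstep : ∀ k, ∑ y ∈ Sᶜ, μ (k + 1) y ≤ (∑ y ∈ Sᶜ, μ k y) + a / pS := by
    intro k
    have h1 : ∑ y ∈ Sᶜ, μ (k + 1) y = ∑ z, μ k z * ∑ y ∈ Sᶜ, Q z y := by
      simp only [hμsucc]
      rw [Finset.sum_comm]
      apply Finset.sum_congr rfl
      intro z _
      rw [Finset.mul_sum]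
    have hsplit : ∑ z, μ k z * ∑ y ∈ Sᶜ, Q z y
        = (∑ z ∈ S, μ k z * ∑ y ∈ Sᶜ, Q z y) + ∑ z ∈ Sᶜ, μ k z * ∑ y ∈ Sᶜ, Q z y :=
      (Finset.sum_add_sum_compl S _).symm
    have hqc0 : ∀ z, 0 ≤ ∑ y ∈ Sᶜ, Q z y := fun z =>
      Finset.sum_nonneg fun y _ => hQ0 z y
    have hqc1 : ∀ z, ∑ y ∈ Sᶜ, Q z y ≤ 1 := by
      intro z
      rw [← hQ1 z]
      exact Finset.sum_le_sum_of_subset_of_nonneg (Finset.subset_univ _)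
        (fun y _ _ => hQ0 z y)
    have hterm1 : ∑ z ∈ S, μ k z * ∑ y ∈ Sᶜ, Q z y ≤ a / pS := by
      calc ∑ z ∈ S, μ k z * ∑ y ∈ Sᶜ, Q z y
          ≤ ∑ z ∈ S, (π z / pS) * ∑ y ∈ Sᶜ, Q z y := by
            apply Finset.sum_le_sum
            intro z _
            exact mul_le_mul_of_nonneg_right (hμle k z) (hqc0 z)
        _ = a / pS := by
            rw [hadef, Finset.sum_div]
            apply Finset.sum_congr rfl
            intro z _
            rw [Finset.sum_div, div_mul_eq_mul_div, Finset.mul_sum, Finset.sum_div]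
    have hterm2 : ∑ z ∈ Sᶜ, μ k z * ∑ y ∈ Sᶜ, Q z y ≤ ∑ z ∈ Sᶜ, μ k z := by
      apply Finset.sum_le_sum
      intro z _
      nth_rewrite 2 [← mul_one (μ k z)]
      exact mul_le_mul_of_nonneg_left (hqc1 z) (hμ0 k z)
    rw [h1, hsplit]
    linarith
  -- total leakage after t steps
  have hbound : ∀ k : ℕ, ∑ y ∈ Sᶜ, μ k y ≤ (k : ℝ) * (a / pS) := by
    intro k
    induction k with
    | zero =>
      have : ∀ y ∈ Sᶜ, μ 0 y = 0 := by
        intro y hy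
        simp only [hμdef, pow_zero]
        rw [div_eq_zero_iff]
        left
        apply Finset.sum_eq_zero
        intro x hx
        have hxy : x ≠ y := by
          intro h; subst h
          exact (Finset.mem_compl.mp hy) hx
        rw [Matrix.one_apply_ne hxy, mul_zero]
      rw [Finset.sum_eq_zero this]
      simp
    | succ n ih =>
      calc ∑ y ∈ Sᶜ, μ (n + 1) y ≤ (∑ y ∈ Sᶜ, μ n y) + a / pS := hstep n
        _ ≤ (n : ℝ) * (a / pS) + a / pS := by linarith
        _ = ((n + 1 : ℕ) : ℝ) * (a / pS) := by push_cast; ring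
  -- TV bound: π(Sᶜ) - μ t (Sᶜ) ≤ 1/4
  have hpSc : (∑ y ∈ Sᶜ, π y) = 1 - pS := by
    have := Finset.sum_add_sum_compl S π
    rw [hπ1] at this
    linarith
  have hTV : ∀ x : Ω, (∑ y ∈ Sᶜ, π y) - (∑ y ∈ Sᶜ, (Q ^ t) x y) ≤ 1 / 4 := by
    intro x
    have hd0 : ∑ y, (π y - (Q ^ t) x y) = 0 := by
      rw [Finset.sum_sub_distrib, hπ1, hrowk t x]; ring
    have hsplit := Finset.sum_add_sum_compl S (fun y => π y - (Q ^ t) x y)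
    have habs : ∀ (T : Finset Ω), ∑ y ∈ T, (π y - (Q ^ t) x y)
        ≤ ∑ y ∈ T, |π y - (Q ^ t) x y| :=
      fun T => Finset.sum_le_sum fun y _ => le_abs_self _
    have habs' : ∀ (T : Finset Ω), -(∑ y ∈ T, (π y - (Q ^ t) x y))
        ≤ ∑ y ∈ T, |π y - (Q ^ t) x y| := by
      intro T
      rw [← Finset.sum_neg_distrib]
      exact Finset.sum_le_sum fun y _ => neg_le_abs _
    have habssum := Finset.sum_add_sum_compl S (fun y => |π y - (Q ^ t) x y|)
    have hm := hmix x
    have haeq : ∑ y, |π y - (Q ^ t) x y| = ∑ y, |(Q ^ t) x y - π y| := by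
      apply Finset.sum_congr rfl
      intro y _
      rw [abs_sub_comm]
    have h2 : ∑ y ∈ Sᶜ, (π y - (Q ^ t) x y) ≤ 1 / 4 := by
      have e1 : ∑ y ∈ Sᶜ, (π y - (Q ^ t) x y) = -(∑ y ∈ S, (π y - (Q ^ t) x y)) := by
        linarith [hsplit, hd0]
      have b1 := habs Sᶜ
      have b2 := habs' S
      rw [haeq] at habssum
      linarith
    rw [Finset.sum_sub_distrib] at h2
    exact h2
  -- combine
  have hcomb : (∑ y ∈ Sᶜ, π y) - (∑ y ∈ Sᶜ, μ t y) ≤ 1 / 4 := by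
    have hwsum : ∑ x ∈ S, π x / pS = 1 := by
      rw [← Finset.sum_div, ← hpSdef, div_self hpS.ne']
    have e1 : ∑ y ∈ Sᶜ, μ t y = ∑ x ∈ S, (π x / pS) * ∑ y ∈ Sᶜ, (Q ^ t) x y := by
      simp only [hμdef]
      rw [← Finset.sum_div, Finset.sum_comm, Finset.sum_div]
      apply Finset.sum_congr rfl
      intro x _
      rw [Finset.mul_sum, Finset.sum_div]
      apply Finset.sum_congr rfl
      intro y _
      ring
    have e2 : (∑ y ∈ Sᶜ, π y) - (∑ y ∈ Sᶜ, μ t y)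
        = ∑ x ∈ S, (π x / pS) * ((∑ y ∈ Sᶜ, π y) - ∑ y ∈ Sᶜ, (Q ^ t) x y) := by
      simp only [mul_sub]
      rw [Finset.sum_sub_distrib, ← Finset.sum_mul, hwsum, one_mul, e1]
    rw [e2]
    calc ∑ x ∈ S, (π x / pS) * ((∑ y ∈ Sᶜ, π y) - ∑ y ∈ Sᶜ, (Q ^ t) x y)
        ≤ ∑ x ∈ S, (π x / pS) * (1 / 4) := by
          apply Finset.sum_le_sum
          intro x _
          exact mul_le_mul_of_nonneg_left (hTV x) (div_nonneg (hπ0 x).le hpS.le)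
      _ = 1 / 4 := by rw [← Finset.sum_mul, hwsum]; ring
  have hb := hbound t
  linarith [hpSc, hhalf, hcomb, hb]

/-- Conductance bounds mixing time from below (Levin–Peres–Wilmer, Thm 7.3):
for a reversible irreducible chain `Q` with stationary distribution `π`,
any time `t` at which the chain is mixed (TV distance ≤ 1/4 from every start)
satisfies `t ≥ 1/(4Φ(S))` for every nonempty proper `S`, i.e. `t_mix ≥ 1/(4Φ*)`. -/
theorem mixing_time_conductance_lower_bound
    {Ω : Type*} [Fintype Ω] [DecidableEq Ω] [Nonempty Ω]
    (Q : Matrix Ω Ω ℝ) (π : Ω → ℝ)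
    (hQ0 : ∀ x y, 0 ≤ Q x y) (hQ1 : ∀ x, ∑ y, Q x y = 1)
    (hπ0 : ∀ x, 0 < π x) (hπ1 : ∑ x, π x = 1)
    (hrev : ∀ x y, π x * Q x y = π y * Q y x)
    (hirr : ∀ x y, ∃ s : ℕ, 0 < (Q ^ s) x y)
    (t : ℕ)
    (hmix : ∀ x : Ω, (1 / 2) * ∑ y, |(Q ^ t) x y - π y| ≤ 1 / 4)
    (S : Finset Ω) (hS1 : S.Nonempty) (hS2 : S ≠ Finset.univ) :
    (t : ℝ) ≥ 1 / (4 * ((∑ x ∈ S, ∑ y ∈ Sᶜ, π x * Q x y)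
      / min (∑ x ∈ S, π x) (∑ x ∈ Sᶜ, π x))) := by
  have hSc1 : Sᶜ.Nonempty := by
    rw [Finset.nonempty_iff_ne_empty]
    intro h
    exact hS2 (by simpa [Finset.compl_eq_empty_iff] using h)
  set a : ℝ := ∑ x ∈ S, ∑ y ∈ Sᶜ, π x * Q x y with hadef
  set pS : ℝ := ∑ x ∈ S, π x with hpSdef
  set pSc : ℝ := ∑ x ∈ Sᶜ, π x with hpScdef
  have hpS : 0 < pS := Finset.sum_pos (fun x _ => hπ0 x) hS1
  have hpSc : 0 < pSc := Finset.sum_pos (fun x _ => hπ0 x) hSc1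
  have hsum : pS + pSc = 1 := by
    rw [hpSdef, hpScdef, Finset.sum_add_sum_compl, hπ1]
  have ha0 : 0 ≤ a :=
    Finset.sum_nonneg fun x _ => Finset.sum_nonneg fun y _ =>
      mul_nonneg (hπ0 x).le (hQ0 x y)
  rcases eq_or_lt_of_le ha0 with hA | hA
  · -- degenerate case: a = 0, RHS is 1/0 = 0
    rw [← hA]
    norm_num
  · have hasym : ∑ x ∈ Sᶜ, ∑ y ∈ Sᶜᶜ, π x * Q x y = a := by
      rw [compl_compl, Finset.sum_comm, hadef]
      apply Finset.sum_congr rfl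
      intro x _
      apply Finset.sum_congr rfl
      intro y _
      exact hrev y x
    rcases le_or_gt pS (1 / 2) with hhalf | hhalf
    · have key := aux_bound Q π hQ0 hQ1 hπ0 hπ1 hrev t hmix S hS1 hhalf
      rw [min_eq_left (by linarith : pS ≤ pSc)]
      have hΦ : 0 < a / pS := div_pos hA hpS
      rw [ge_iff_le, div_le_iff₀ (by positivity)]
      nlinarith [key]
    · have hhalf' : pSc ≤ 1 / 2 := by linarith
      have key := aux_bound Q π hQ0 hQ1 hπ0 hπ1 hrev t hmix Sᶜ hSc1 hhalf'
      rw [hasym] at key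
      rw [min_eq_right (by linarith : pSc ≤ pS)]
      have hΦ : 0 < a / pSc := div_pos hA hpSc
      rw [ge_iff_le, div_le_iff₀ (by positivity)]
      nlinarith [key]
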